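/- arXiv:2207.06063 — 3 statements merged into one kernel-verified Lean document; each statement's English description precedes it below -/
import Mathlib

section
/- Let X be a topological sequence space (a linear subspace of 𝕂^ℕ* whose topology is finer than the topology of coordinatewise convergence) in which the canonical unit vectors (e_n) form a basis, and suppose the unweighted backward shift B(x_1, x_2, x_3, …) = (x_2, x_3, x_4, …) is a continuous linear operator on X. If e_n → 0 in X as n → ∞, then B is mixing. -/
/-!
Kitai's criterion: for an additive map `T`, if `T^n x → 0` on a dense set and every point `y` of a
dense set has preimages `T^n s_n = y` with `s_n → 0`, then `T` is mixing, since `x + s_n` is close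
to `x` while `T^n (x + s_n)` is close to `y`. For the backward shift both hold on the span of the
unit vectors: `B^n e_k = 0` once `n > k`, and `s_n = e_{n+k}` tends to `0` by hypothesis. The span
is dense because the `e_n` form a basis.
-/

open Filter Topology

/-- A continuous map `T` is (topologically) mixing. -/
def Mixing {X : Type*} [TopologicalSpace X] (T : X → X) : Prop :=
  ∀ U V : Set X, IsOpen U → IsOpen V → U.Nonempty → V.Nonempty →
    ∃ N : ℕ, ∀ n ≥ N, (T^[n] '' U ∩ V).Nonempty

theorem Mixing.of_dense_tendsto_iterate {X F : Type*} [TopologicalSpace X] [AddCommMonoid X]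
    [ContinuousAdd X] [FunLike F X X] [AddMonoidHomClass F X X] (T : F) {D₀ D : Set X}
    (hD₀ : Dense D₀) (hD : Dense D)
    (hT : ∀ x ∈ D₀, Tendsto (fun n => T^[n] x) atTop (𝓝 0))
    (hS : ∀ y ∈ D, ∃ s : ℕ → X, Tendsto s atTop (𝓝 0) ∧ ∀ᶠ n in atTop, T^[n] (s n) = y) :
    Mixing T := by
  intro U V hU hV hUne hVne
  obtain ⟨x, hxU, hxD₀⟩ := hD₀.inter_open_nonempty U hU hUne
  obtain ⟨y, hyV, hyD⟩ := hD.inter_open_nonempty V hV hVne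
  obtain ⟨s, hs, hTs⟩ := hS y hyD
  have hnear_x : Tendsto (fun n => x + s n) atTop (𝓝 x) := by
    simpa using tendsto_const_nhds.add hs
  have hnear_y : Tendsto (fun n => T^[n] x + y) atTop (𝓝 y) := by
    simpa using (hT x hxD₀).add_const y
  have hmem : ∀ᶠ n in atTop, x + s n ∈ U ∧ T^[n] (x + s n) ∈ V := by
    filter_upwards [hnear_x.eventually (hU.mem_nhds hxU), hnear_y.eventually (hV.mem_nhds hyV),
      hTs] with n hn_U hn_V hn_s
    rw [iterate_map_add, hn_s]
    exact ⟨hn_U, hn_V⟩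
  obtain ⟨N, hN⟩ := eventually_atTop.1 hmem
  exact ⟨N, fun n hn => ⟨_, ⟨_, (hN n hn).1, rfl⟩, (hN n hn).2⟩⟩

theorem LinearMap.iterate_map_smul {R X : Type*} [Semiring R] [AddCommMonoid X] [Module R X]
    (T : X →ₗ[R] X) (n : ℕ) (c : R) (x : X) : T^[n] (c • x) = c • T^[n] x := by
  rw [← Module.End.coe_pow, map_smul]

section SpanInduction

variable {R X ι : Type*} [Semiring R] [AddCommMonoid X] [Module R X] [TopologicalSpace X]
  [ContinuousAdd X] [ContinuousConstSMul R X] (T : X →ₗ[R] X) {v : ι → X}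

theorem tendsto_iterate_zero_of_mem_span
    (hv : ∀ i, Tendsto (fun n => T^[n] (v i)) atTop (𝓝 0)) {x : X}
    (hx : x ∈ Submodule.span R (Set.range v)) :
    Tendsto (fun n => T^[n] x) atTop (𝓝 0) := by
  induction hx using Submodule.span_induction with
  | mem _ h =>
    obtain ⟨i, rfl⟩ := h
    exact hv i
  | zero => simp only [iterate_map_zero, tendsto_const_nhds]
  | add x y _ _ hx hy => simpa only [iterate_map_add, add_zero] using hx.add hy
  | smul c x _ hx => simpa only [T.iterate_map_smul, smul_zero] using hx.const_smul c

theorem exists_tendsto_zero_iterate_eq_of_mem_span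
    (hv : ∀ i, ∃ s : ℕ → X, Tendsto s atTop (𝓝 0) ∧ ∀ᶠ n in atTop, T^[n] (s n) = v i) {y : X}
    (hy : y ∈ Submodule.span R (Set.range v)) :
    ∃ s : ℕ → X, Tendsto s atTop (𝓝 0) ∧ ∀ᶠ n in atTop, T^[n] (s n) = y := by
  induction hy using Submodule.span_induction with
  | mem _ h =>
    obtain ⟨i, rfl⟩ := h
    exact hv i
  | zero => exact ⟨0, tendsto_const_nhds, .of_forall fun n => iterate_map_zero T n⟩
  | add x y _ _ hx hy =>
    obtain ⟨s, hs, hTs⟩ := hx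
    obtain ⟨t, ht, hTt⟩ := hy
    refine ⟨fun n => s n + t n, by simpa using hs.add ht, ?_⟩
    filter_upwards [hTs, hTt] with n hn_s hn_t
    rw [iterate_map_add, hn_s, hn_t]
  | smul c x _ hx =>
    obtain ⟨s, hs, hTs⟩ := hx
    refine ⟨fun n => c • s n, by simpa using hs.const_smul c, ?_⟩
    filter_upwards [hTs] with n hn_s
    rw [T.iterate_map_smul, hn_s]

end SpanInduction

theorem dense_span_of_forall_tendsto_sum {R X : Type*} [Semiring R] [AddCommMonoid X]
    [Module R X] [TopologicalSpace X] {e : ℕ → X}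
    (h : ∀ x : X, ∃ α : ℕ → R,
      Tendsto (fun N => ∑ n ∈ Finset.range N, α n • e n) atTop (𝓝 x)) :
    Dense (Submodule.span R (Set.range e) : Set X) := fun x => by
  obtain ⟨α, hα⟩ := h x
  exact mem_closure_of_tendsto hα <| .of_forall fun N =>
    Submodule.sum_mem _ fun n _ => Submodule.smul_mem _ _ (Submodule.subset_span ⟨n, rfl⟩)

section Shift

variable {X : Type*} {T : X → X} {e : ℕ → X}

theorem iterate_apply_add_of_shift (hT : ∀ k, T (e (k + 1)) = e k) (n k : ℕ) :
    T^[n] (e (n + k)) = e k := by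
  induction n with
  | zero => simp
  | succ n ih => rw [Function.iterate_succ_apply, Nat.add_right_comm, hT, ih]

theorem iterate_apply_eq_zero_of_shift [Zero X] (hT : ∀ k, T (e (k + 1)) = e k)
    (hT₀ : T (e 0) = 0) (hT_zero : T 0 = 0) {n k : ℕ} (hkn : k < n) : T^[n] (e k) = 0 := by
  obtain ⟨m, rfl⟩ := Nat.exists_eq_add_of_lt hkn
  have h : T^[k] (e k) = e 0 := iterate_apply_add_of_shift hT k 0
  rw [add_assoc, add_comm, Function.iterate_add_apply, Function.iterate_add_apply, h,
    Function.iterate_one, hT₀, Function.iterate_fixed hT_zero]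

end Shift

theorem backward_shift_mixing_of_tendsto_general
    {𝕜 : Type*} [RCLike 𝕜] {X : Type*} [AddCommGroup X] [Module 𝕜 X]
    [TopologicalSpace X] [IsTopologicalAddGroup X] [ContinuousSMul 𝕜 X]
    (ι : X →ₗ[𝕜] (ℕ → 𝕜)) (hinj : Function.Injective ι)
    (e : ℕ → X) (he : ∀ n, ι (e n) = Pi.single n 1)
    (hbasis : ∀ x : X, ∃! α : ℕ → 𝕜,
      Tendsto (fun N => ∑ n ∈ Finset.range N, α n • e n) atTop (𝓝 x))
    (B : X →ₗ[𝕜] X) (hB : ∀ x n, ι (B x) n = ι x (n + 1))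
    (h0 : Tendsto e atTop (𝓝 (0 : X))) :
    Mixing (⇑B) := by
  have hshift : ∀ k, B (e (k + 1)) = e k := fun k =>
    hinj <| funext fun n => by simp [hB, he, Pi.single_apply]
  have hshift₀ : B (e 0) = 0 := hinj <| funext fun n => by simp [hB, he]
  have hdense := dense_span_of_forall_tendsto_sum fun x => (hbasis x).exists
  refine Mixing.of_dense_tendsto_iterate B hdense hdense
    (fun x hx => tendsto_iterate_zero_of_mem_span B (fun k => ?_) hx)
    (fun y hy => exists_tendsto_zero_iterate_eq_of_mem_span B (fun k => ?_) hy)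
  · refine tendsto_const_nhds.congr' ?_
    filter_upwards [eventually_gt_atTop k] with n hkn
    exact (iterate_apply_eq_zero_of_shift hshift hshift₀ (map_zero B) hkn).symm
  · exact ⟨fun n => e (n + k), h0.comp (tendsto_add_atTop_nat k),
      .of_forall fun n => iterate_apply_add_of_shift hshift n k⟩

/-- If `X` is a topological sequence space (realized via the continuous injective
coordinate embedding `ι : X → 𝕜^ℕ`) in which the canonical unit vectors `e n` form a
basis, the backward shift `B` is continuous and linear on `X`, and `e n → 0`,
then `B` is mixing. -/
theorem backward_shift_mixing_of_tendsto
    {𝕜 : Type*} [RCLike 𝕜] {X : Type*} [AddCommGroup X] [Module 𝕜 X]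
    [TopologicalSpace X] [IsTopologicalAddGroup X] [ContinuousSMul 𝕜 X]
    (ι : X →ₗ[𝕜] (ℕ → 𝕜)) (hinj : Function.Injective ι) (hι : Continuous ι)
    (e : ℕ → X) (he : ∀ n, ι (e n) = Pi.single n 1)
    (hbasis : ∀ x : X, ∃! α : ℕ → 𝕜,
      Tendsto (fun N => ∑ n ∈ Finset.range N, α n • e n) atTop (𝓝 x))
    (B : X →ₗ[𝕜] X) (hBc : Continuous B) (hB : ∀ x n, ι (B x) n = ι x (n + 1))
    (h0 : Tendsto e atTop (𝓝 (0 : X))) :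
    Mixing (⇑B) :=
  backward_shift_mixing_of_tendsto_general ι hinj e he hbasis B hB h0
end

section
/- Let X be a barrelled topological sequence space in which the canonical unit vectors (e_n) form a basis, and suppose the unweighted backward shift B(x_1, x_2, x_3, …) = (x_2, x_3, x_4, …) is a continuous linear operator on X. If B is mixing, then e_n → 0 in X as n → ∞. -/
open Filter Topology

/-- A barrel: a closed, balanced, convex, absorbing set. -/
def IsBarrelS (𝕜 : Type*) {X : Type*} [RCLike 𝕜] [AddCommGroup X] [Module 𝕜 X]
    [TopologicalSpace X] (A : Set X) : Prop :=
  IsClosed A ∧ (∀ t : 𝕜, ‖t‖ ≤ 1 → ∀ a ∈ A, t • a ∈ A) ∧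
    (∀ a ∈ A, ∀ b ∈ A, ∀ s t : ℝ, 0 ≤ s → 0 ≤ t → s + t = 1 →
      (s : 𝕜) • a + (t : 𝕜) • b ∈ A) ∧
    (∀ x : X, ∃ ε > (0 : ℝ), ∀ t : 𝕜, ‖t‖ < ε → t • x ∈ A)

/-
The coordinate projections `P n x = x_n • e n` are continuous linear maps, and since `(e n)` is
a basis, `P n x → 0` for every `x`; in particular each orbit `(P n x)_n` is bounded. Hence, for a
closed, balanced, convex neighbourhood `W` of `0`, the set `A = {x | ∀ n, x_n • e n ∈ W}` is a
barrel, so a neighbourhood of `0`. Mixing of `B`, tested against `interior A` and the open set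
`{x | 1 < ‖x_0‖}`, gives for every large `n` some `u ∈ A` with `1 < ‖u_n‖`; as `W` is balanced,
`e n = u_n⁻¹ • (u_n • e n) ∈ W`.
-/

open Set

/-- Convexity over `ℝ ⊆ 𝕜`, phrased without a `Module ℝ X` instance as in `IsBarrelS`. -/
def RealConvex (𝕜 : Type*) {X : Type*} [RCLike 𝕜] [AddCommGroup X] [Module 𝕜 X]
    (C : Set X) : Prop :=
  ∀ a ∈ C, ∀ b ∈ C, ∀ s t : ℝ, 0 ≤ s → 0 ≤ t → s + t = 1 → (s : 𝕜) • a + (t : 𝕜) • b ∈ C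

theorem Balanced.mem_of_smul_mem {𝕜 E : Type*} [NormedDivisionRing 𝕜] [AddCommGroup E]
    [Module 𝕜 E] {s : Set E} (hs : Balanced 𝕜 s) {c : 𝕜} {x : E} (hc : 1 ≤ ‖c‖)
    (h : c • x ∈ s) : x ∈ s := by
  have hc0 : c ≠ 0 := norm_pos_iff.mp (one_pos.trans_le hc)
  have hinv : ‖c⁻¹‖ ≤ 1 := norm_inv c ▸ inv_le_one_of_one_le₀ hc
  simpa [smul_smul, inv_mul_cancel₀ hc0] using hs.smul_mem hinv h

theorem tendsto_zero_of_tendsto_sum_range {X : Type*} [AddCommGroup X] [TopologicalSpace X]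
    [IsTopologicalAddGroup X] {f : ℕ → X} {x : X}
    (h : Tendsto (fun N => ∑ n ∈ Finset.range N, f n) atTop (𝓝 x)) :
    Tendsto f atTop (𝓝 0) := by
  have hdiff := (h.comp (tendsto_add_atTop_nat 1)).sub h
  rw [sub_self] at hdiff
  simpa only [Function.comp_def, Finset.sum_range_succ_sub_sum] using hdiff

theorem iterate_shift_coord {X K : Type*} {B : X → X} {ι : X → ℕ → K}
    (hB : ∀ x n, ι (B x) n = ι x (n + 1)) (k : ℕ) (x : X) (n : ℕ) :
    ι (B^[k] x) n = ι x (n + k) := by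
  induction k generalizing x with
  | zero => rfl
  | succ k ih => rw [Function.iterate_succ_apply, ih, hB]; rfl

theorem Mixing.eventually_exists_coord_mem {X K : Type*} [TopologicalSpace X]
    [TopologicalSpace K] {B : X → X} (hmix : Mixing B) {ι : X → ℕ → K} (hι : Continuous ι)
    (hB : ∀ x n, ι (B x) n = ι x (n + 1)) {O : Set K} (hO : IsOpen O) (hιO : ∃ v, ι v 0 ∈ O)
    {U : Set X} (hU : (interior U).Nonempty) :
    ∀ᶠ n in atTop, ∃ u ∈ U, ι u n ∈ O := by
  obtain ⟨N, hN⟩ := hmix _ ((ι · 0) ⁻¹' O) isOpen_interior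
    (hO.preimage ((continuous_apply 0).comp hι)) hU hιO
  refine eventually_atTop.mpr ⟨N, fun n hn => ?_⟩
  obtain ⟨_, ⟨u, hu, rfl⟩, hv⟩ := hN n hn
  refine ⟨u, interior_subset hu, ?_⟩
  simpa [iterate_shift_coord hB] using hv

theorem coord_eq_of_tendsto_sum {𝕜 X : Type*} [Semiring 𝕜] [TopologicalSpace 𝕜] [T2Space 𝕜]
    [AddCommGroup X] [Module 𝕜 X] [TopologicalSpace X] {ι : X →ₗ[𝕜] ℕ → 𝕜}
    (hι : Continuous ι) {e : ℕ → X} (he : ∀ n, ι (e n) = Pi.single n 1) {α : ℕ → 𝕜} {x : X}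
    (hx : Tendsto (fun N => ∑ n ∈ Finset.range N, α n • e n) atTop (𝓝 x)) : ι x = α := by
  funext m
  have hlim := ((continuous_apply m).comp hι).continuousAt.tendsto.comp hx
  refine tendsto_nhds_unique hlim (tendsto_const_nhds.congr' ?_)
  filter_upwards [eventually_gt_atTop m] with N hN
  simp [map_sum, he, Finset.sum_apply, Pi.single_apply, hN]

section RealConvex

variable {𝕜 X : Type*} [RCLike 𝕜] [AddCommGroup X] [Module 𝕜 X]

theorem RealConvex.balancedCore {C : Set X} (hC : RealConvex 𝕜 C) (h0 : (0 : X) ∈ C) :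
    RealConvex 𝕜 (balancedCore 𝕜 C) := by
  intro a ha b hb s t hs ht hst
  simp only [balancedCore_eq_iInter h0, mem_iInter₂] at ha hb ⊢
  intro r hr
  have hr0 : r ≠ 0 := norm_pos_iff.mp (one_pos.trans_le hr)
  have ha' := (mem_smul_set_iff_inv_smul_mem₀ hr0 _ _).mp (ha r hr)
  have hb' := (mem_smul_set_iff_inv_smul_mem₀ hr0 _ _).mp (hb r hr)
  rw [mem_smul_set_iff_inv_smul_mem₀ hr0, smul_add, smul_comm r⁻¹, smul_comm r⁻¹]
  exact hC _ ha' _ hb' s t hs ht hst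

theorem RealConvex.closure [TopologicalSpace X] [ContinuousAdd X] [ContinuousConstSMul 𝕜 X]
    {C : Set X} (hC : RealConvex 𝕜 C) : RealConvex 𝕜 (closure C) :=
  fun _ ha _ hb s t hs ht hst =>
    map_mem_closure₂ (f := fun p q => (s : 𝕜) • p + (t : 𝕜) • q) (by fun_prop) ha hb
      fun _ hp _ hq => hC _ hp _ hq s t hs ht hst

theorem nhds_zero_hasBasis_isClosed_balanced_realConvex [TopologicalSpace X]
    [IsTopologicalAddGroup X] [ContinuousSMul 𝕜 X]
    (hlc : ∀ U ∈ 𝓝 (0 : X), ∃ C ∈ 𝓝 (0 : X), C ⊆ U ∧ RealConvex 𝕜 C) :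
    (𝓝 (0 : X)).HasBasis
      (fun W => W ∈ 𝓝 0 ∧ IsClosed W ∧ Balanced 𝕜 W ∧ RealConvex 𝕜 W) id := by
  refine hasBasis_self.mpr fun U hU => ?_
  obtain ⟨U₁, hU₁, hU₁c, hU₁U⟩ := exists_mem_nhds_isClosed_subset hU
  obtain ⟨C, hC, hCU₁, hCconv⟩ := hlc U₁ hU₁
  exact ⟨closure (balancedCore 𝕜 C),
    mem_of_superset (balancedCore_mem_nhds_zero hC) subset_closure, ⟨isClosed_closure,
    (balancedCore_balanced C).closure, (hCconv.balancedCore (mem_of_mem_nhds hC)).closure⟩,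
    (closure_minimal ((balancedCore_subset C).trans hCU₁) hU₁c).trans hU₁U⟩

theorem isBarrelS_iInter_preimage [TopologicalSpace X] {κ Y : Type*} [AddCommGroup Y]
    [Module 𝕜 Y] [TopologicalSpace Y] (P : κ → X →L[𝕜] Y)
    (hP : ∀ x, Bornology.IsVonNBounded 𝕜 (range fun n => P n x)) {W : Set Y}
    (hW : W ∈ 𝓝 0) (hWc : IsClosed W) (hWb : Balanced 𝕜 W) (hWconv : RealConvex 𝕜 W) :
    IsBarrelS 𝕜 (⋂ n, P n ⁻¹' W) := by
  simp only [IsBarrelS, mem_iInter, mem_preimage, map_add, map_smul]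
  refine ⟨isClosed_iInter fun n => hWc.preimage (P n).continuous,
    fun t ht a ha n => hWb.smul_mem ht (ha n),
    fun a ha b hb s t hs ht hst n => hWconv _ (ha n) _ (hb n) s t hs ht hst, fun x => ?_⟩
  obtain ⟨ε, hε, hεW⟩ := Metric.eventually_nhds_iff.mp
    ((hP x hW).eventually_nhds_zero (mem_of_mem_nhds hW))
  exact ⟨ε, hε, fun t ht n => hεW (by rwa [dist_zero_right]) (mem_range_self n)⟩

end RealConvex

theorem tendsto_of_backward_shift_mixing_general
    {𝕜 : Type*} [RCLike 𝕜] {X : Type*} [AddCommGroup X] [Module 𝕜 X]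
    [TopologicalSpace X] [IsTopologicalAddGroup X] [ContinuousSMul 𝕜 X]
    -- X is locally convex:
    (hlc : ∀ U ∈ 𝓝 (0 : X), ∃ C ∈ 𝓝 (0 : X), C ⊆ U ∧
      ∀ a ∈ C, ∀ b ∈ C, ∀ s t : ℝ, 0 ≤ s → 0 ≤ t → s + t = 1 →
        (s : 𝕜) • a + (t : 𝕜) • b ∈ C)
    -- X is barrelled:
    (hbarrelled : ∀ A : Set X, IsBarrelS 𝕜 A → A ∈ 𝓝 (0 : X))
    (ι : X →ₗ[𝕜] (ℕ → 𝕜)) (hι : Continuous ι)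
    (e : ℕ → X) (he : ∀ n, ι (e n) = Pi.single n 1)
    (hbasis : ∀ x : X, ∃! α : ℕ → 𝕜,
      Tendsto (fun N => ∑ n ∈ Finset.range N, α n • e n) atTop (𝓝 x))
    (B : X →ₗ[𝕜] X) (hB : ∀ x n, ι (B x) n = ι x (n + 1))
    (hmix : Mixing (⇑B)) :
    Tendsto e atTop (𝓝 (0 : X)) := by
  let P (n : ℕ) : X →L[𝕜] X := (ContinuousLinearMap.proj n ∘L ⟨ι, hι⟩).smulRight (e n)
  have hP (x : X) : Tendsto (fun n => P n x) atTop (𝓝 0) := by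
    obtain ⟨α, hα, -⟩ := hbasis x
    simpa [P, coord_eq_of_tendsto_sum hι he hα] using tendsto_zero_of_tendsto_sum_range hα
  refine (nhds_zero_hasBasis_isClosed_balanced_realConvex hlc).tendsto_right_iff.mpr ?_
  rintro W ⟨hW, hWc, hWb, hWconv⟩
  have hA := hbarrelled _ <|
    isBarrelS_iInter_preimage P (fun x => (hP x).isVonNBounded_range 𝕜) hW hWc hWb hWconv
  have hO : ∃ v, ι v 0 ∈ {c : 𝕜 | 1 < ‖c‖} := ⟨(2 : 𝕜) • e 0, by norm_num [he]⟩
  filter_upwards [hmix.eventually_exists_coord_mem hι hB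
    (isOpen_lt continuous_const continuous_norm) hO ⟨0, mem_interior_iff_mem_nhds.mpr hA⟩]
    with n ⟨u, hu, hun⟩
  exact hWb.mem_of_smul_mem hun.le (mem_iInter.mp hu n)

/-- If `X` is a barrelled topological sequence space in which the unit vectors form a
basis and the backward shift `B` is a mixing continuous linear operator, then `e n → 0`. -/
theorem tendsto_of_backward_shift_mixing
    {𝕜 : Type*} [RCLike 𝕜] {X : Type*} [AddCommGroup X] [Module 𝕜 X]
    [TopologicalSpace X] [IsTopologicalAddGroup X] [ContinuousSMul 𝕜 X]
    -- X is locally convex: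
    (hlc : ∀ U ∈ 𝓝 (0 : X), ∃ C ∈ 𝓝 (0 : X), C ⊆ U ∧
      ∀ a ∈ C, ∀ b ∈ C, ∀ s t : ℝ, 0 ≤ s → 0 ≤ t → s + t = 1 →
        (s : 𝕜) • a + (t : 𝕜) • b ∈ C)
    -- X is barrelled:
    (hbarrelled : ∀ A : Set X, IsBarrelS 𝕜 A → A ∈ 𝓝 (0 : X))
    (ι : X →ₗ[𝕜] (ℕ → 𝕜)) (hinj : Function.Injective ι) (hι : Continuous ι)
    (e : ℕ → X) (he : ∀ n, ι (e n) = Pi.single n 1)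
    (hbasis : ∀ x : X, ∃! α : ℕ → 𝕜,
      Tendsto (fun N => ∑ n ∈ Finset.range N, α n • e n) atTop (𝓝 x))
    (B : X →ₗ[𝕜] X) (hBc : Continuous B) (hB : ∀ x n, ι (B x) n = ι x (n + 1))
    (hmix : Mixing (⇑B)) :
    Tendsto e atTop (𝓝 (0 : X)) :=
  tendsto_of_backward_shift_mixing_general hlc hbarrelled ι hι e he hbasis B hB hmix
end

section
/- Let X be a barrelled topological sequence space in which the canonical unit vectors (e_n) form a basis, and suppose the unweighted backward shift B(x_1, x_2, x_3, …) = (x_2, x_3, x_4, …) is a continuous linear operator on X. Then B is mixing if and only if e_n → 0 in X as n → ∞. -/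
open Filter Topology

/-!
The coordinates of `B^[n] x` are those of `x` shifted by `n`.

If `e n → 0`: given open `U ∋ x` and `V ∋ y`, take partial sums `x' ∈ U`, `y' ∈ V` of length
`M`, `K`. For `n ≥ M` the vector `x' + ∑_{k<K} y_k e_{n+k}` is mapped by `B^[n]` to `y'`, and it
tends to `x'` as `n → ∞`, so it lies in `U` for large `n`.

Conversely, the maps `x ↦ x_m e_m` tend pointwise to `0`, so by Banach–Steinhaus (this is where
barrelledness enters) for each balanced neighbourhood `W` of `0` some neighbourhood `A` of `0`
satisfies `x_m e_m ∈ W` for all `x ∈ A` and all `m`. Mixing gives, for all large `n`, some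
`x ∈ A` with `|x_n| = |(B^[n] x)_0| > 1`, and then `e_n = x_n⁻¹ • x_n e_n ∈ W`.
-/

open Set Bornology Pointwise

section LocallyConvex

variable {𝕜 X : Type*} [RCLike 𝕜] [AddCommGroup X] [Module 𝕜 X] [Module ℝ X]
  [IsScalarTower ℝ 𝕜 X]

theorem Convex.balancedCore {s : Set X} (hs : Convex ℝ s) (h0 : (0 : X) ∈ s) :
    Convex ℝ (balancedCore 𝕜 s) := by
  rw [balancedCore_eq_iInter h0]
  refine convex_iInter₂ fun r _ => ?_
  rw [← image_smul]
  exact hs.linear_image (DistribSMul.toLinearMap ℝ X r)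

variable [TopologicalSpace X]

theorem IsBarrelS.of_convex {A : Set X} (hclosed : IsClosed A) (hbal : Balanced 𝕜 A)
    (hconv : Convex ℝ A) (habs : ∀ x : X, ∀ᶠ t : 𝕜 in 𝓝 0, t • x ∈ A) : IsBarrelS 𝕜 A := by
  refine ⟨hclosed, fun t ht a ha => hbal.smul_mem ht ha, fun a ha b hb s t hs ht hst => ?_,
    fun x => ?_⟩
  · simpa only [RCLike.real_smul_eq_coe_smul (K := 𝕜)] using hconv ha hb hs ht hst
  · obtain ⟨ε, hε, hball⟩ := Metric.eventually_nhds_iff.1 (habs x)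
    exact ⟨ε, hε, fun t ht => hball (by rwa [dist_zero_right])⟩

theorem exists_isClosed_balanced_convex_nhds_zero_subset [IsTopologicalAddGroup X]
    [ContinuousSMul 𝕜 X] [LocallyConvexSpace ℝ X] {W : Set X} (hW : W ∈ 𝓝 0) :
    ∃ D ∈ 𝓝 (0 : X), D ⊆ W ∧ IsClosed D ∧ Balanced 𝕜 D ∧ Convex ℝ D := by
  have : ContinuousSMul ℝ X := IsScalarTower.continuousSMul 𝕜
  obtain ⟨F, hF, hFclosed, hFW⟩ := exists_mem_nhds_isClosed_subset hW
  obtain ⟨C, hC, hCconv, hCF⟩ :=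
    (locallyConvexSpace_iff_exists_convex_subset_zero ℝ X).1 ‹_› F hF
  have hC' : closure C ∈ 𝓝 (0 : X) := mem_of_superset hC subset_closure
  exact ⟨balancedCore 𝕜 (closure C), balancedCore_mem_nhds_zero hC',
    (balancedCore_subset _).trans ((closure_minimal hCF hFclosed).trans hFW),
    isClosed_closure.balancedCore, balancedCore_balanced _,
    hCconv.closure.balancedCore (mem_of_mem_nhds hC')⟩

/-- Banach–Steinhaus for barrelled spaces. -/
theorem setOf_forall_mem_nhds_zero_of_isVonNBounded {Y : Type*} [AddCommGroup Y] [Module 𝕜 Y]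
    [Module ℝ Y] [IsScalarTower ℝ 𝕜 Y] [TopologicalSpace Y] [IsTopologicalAddGroup Y]
    [ContinuousSMul 𝕜 Y] [LocallyConvexSpace ℝ Y]
    (hbarrelled : ∀ A : Set X, IsBarrelS 𝕜 A → A ∈ 𝓝 (0 : X))
    {κ : Type*} (T : κ → X →ₗ[𝕜] Y) (hT : ∀ i, Continuous (T i))
    (hbdd : ∀ x, IsVonNBounded 𝕜 (range fun i => T i x)) {W : Set Y} (hW : W ∈ 𝓝 0) :
    {x | ∀ i, T i x ∈ W} ∈ 𝓝 0 := by
  obtain ⟨D, hD, hDW, hDclosed, hDbal, hDconv⟩ :=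
    exists_isClosed_balanced_convex_nhds_zero_subset (𝕜 := 𝕜) hW
  refine mem_of_superset (hbarrelled (⋂ i, T i ⁻¹' D) (.of_convex ?_ ?_ ?_ fun x => ?_))
    fun x hx => mem_ofPred.2 fun i => hDW (mem_iInter.1 hx i)
  · exact isClosed_iInter fun i => hDclosed.preimage (hT i)
  · exact balanced_iInter fun i => hDbal.mulActionHom_preimage (T i).toMulActionHom
  · exact convex_iInter fun i => hDconv.linear_preimage ((T i).restrictScalars ℝ)
  · filter_upwards [(hbdd x hD).eventually_nhds_zero (mem_of_mem_nhds hD)] with t ht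
    exact mem_iInter.2 fun i => by simpa using ht (mem_range_self i)

end LocallyConvex

def IsBackwardShift {𝕜 X : Type*} (ι : X → ℕ → 𝕜) (B : X → X) : Prop :=
  ∀ x n, ι (B x) n = ι x (n + 1)

theorem IsBackwardShift.iterate {𝕜 X : Type*} {ι : X → ℕ → 𝕜} {B : X → X}
    (hB : IsBackwardShift ι B) (k : ℕ) (x : X) (n : ℕ) : ι (B^[k] x) n = ι x (n + k) := by
  induction k generalizing x with
  | zero => rfl
  | succ k ih => rw [Function.iterate_succ_apply, ih, hB, add_assoc]

section SequenceSpace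

variable {𝕜 X : Type*} [Semiring 𝕜] [AddCommMonoid X] [Module 𝕜 X]
  {ι : X →ₗ[𝕜] ℕ → 𝕜} {e : ℕ → X}

def partialSum (ι : X →ₗ[𝕜] ℕ → 𝕜) (e : ℕ → X) (N : ℕ) (x : X) : X :=
  ∑ k ∈ Finset.range N, ι x k • e k

theorem coord_sum_smul_basis (he : ∀ n, ι (e n) = Pi.single n 1) (α : ℕ → 𝕜) (N k : ℕ) :
    ι (∑ n ∈ Finset.range N, α n • e n) k = if k < N then α k else 0 := by
  simp [map_sum, he, Pi.single_apply]

theorem IsBackwardShift.iterate_sum_add_sum_shifted {B : X → X} (hB : IsBackwardShift ι B)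
    (hinj : Function.Injective ι) (he : ∀ n, ι (e n) = Pi.single n 1) (a c : ℕ → 𝕜)
    {M n : ℕ} (hMn : M ≤ n) (K : ℕ) :
    B^[n] (∑ k ∈ Finset.range M, a k • e k + ∑ k ∈ Finset.range K, c k • e (n + k)) =
      ∑ k ∈ Finset.range K, c k • e k := by
  refine hinj (funext fun j => ?_)
  rw [hB.iterate]
  simp [map_sum, he, Pi.single_apply, add_comm n, show ¬j + n < M by omega]

variable [TopologicalSpace 𝕜] [T2Space 𝕜] [TopologicalSpace X]

theorem tendsto_partialSum (hι : Continuous ι) (he : ∀ n, ι (e n) = Pi.single n 1)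
    (hbasis : ∀ x, ∃ α : ℕ → 𝕜,
      Tendsto (fun N => ∑ n ∈ Finset.range N, α n • e n) atTop (𝓝 x)) (x : X) :
    Tendsto (fun N => partialSum ι e N x) atTop (𝓝 x) := by
  obtain ⟨α, hα⟩ := hbasis x
  suffices ι x = α by simpa only [partialSum, this] using hα
  funext k
  refine tendsto_nhds_unique (((continuous_apply k).comp hι).continuousAt.tendsto.comp hα) ?_
  refine tendsto_const_nhds.congr' ?_
  filter_upwards [eventually_gt_atTop k] with N hN
  simp [coord_sum_smul_basis he, hN]

end SequenceSpace

theorem IsBackwardShift.mixing_of_tendsto_basis_zero {𝕜 X : Type*} [Semiring 𝕜]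
    [AddCommMonoid X] [Module 𝕜 X] [TopologicalSpace X] [ContinuousAdd X]
    [ContinuousConstSMul 𝕜 X]
    {ι : X →ₗ[𝕜] ℕ → 𝕜} {e : ℕ → X} {B : X → X} (hB : IsBackwardShift ι B)
    (hinj : Function.Injective ι) (he : ∀ n, ι (e n) = Pi.single n 1)
    (hpartial : ∀ x, Tendsto (fun N => partialSum ι e N x) atTop (𝓝 x))
    (he0 : Tendsto e atTop (𝓝 0)) : Mixing B := by
  rintro U V hU hV ⟨x, hx⟩ ⟨y, hy⟩
  obtain ⟨M, hM⟩ := ((hpartial x).eventually_mem (hU.mem_nhds hx)).exists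
  obtain ⟨K, hK⟩ := ((hpartial y).eventually_mem (hV.mem_nhds hy)).exists
  set tail : ℕ → X := fun n => ∑ k ∈ Finset.range K, ι y k • e (n + k)
  have htail : Tendsto tail atTop (𝓝 0) := by
    simpa using tendsto_finsetSum (Finset.range K) fun k _ =>
      (he0.comp (tendsto_add_atTop_nat k)).const_smul (ι y k)
  have hU' : ∀ᶠ n in atTop, partialSum ι e M x + tail n ∈ U := by
    simpa using (tendsto_const_nhds.add htail).eventually_mem (hU.mem_nhds (by rwa [add_zero]))
  obtain ⟨N, hN⟩ := eventually_atTop.1 (hU'.and (eventually_ge_atTop M))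
  refine ⟨N, fun n hn => ⟨_, mem_image_of_mem _ (hN n hn).1, ?_⟩⟩
  rwa [partialSum, hB.iterate_sum_add_sum_shifted hinj he _ _ (hN n hn).2]

theorem IsBackwardShift.tendsto_basis_zero_of_mixing {𝕜 X : Type*} [RCLike 𝕜] [AddCommGroup X]
    [Module 𝕜 X] [Module ℝ X] [IsScalarTower ℝ 𝕜 X] [TopologicalSpace X]
    [IsTopologicalAddGroup X] [ContinuousSMul 𝕜 X] [LocallyConvexSpace ℝ X]
    (hbarrelled : ∀ A : Set X, IsBarrelS 𝕜 A → A ∈ 𝓝 (0 : X))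
    {ι : X →ₗ[𝕜] ℕ → 𝕜} {e : ℕ → X} {B : X → X} (hB : IsBackwardShift ι B)
    (hι : Continuous ι) (hpartial : ∀ x, Tendsto (fun N => partialSum ι e N x) atTop (𝓝 x))
    (he0 : ι (e 0) = Pi.single 0 1) (hmix : Mixing B) : Tendsto e atTop (𝓝 0) := by
  set D : ℕ → X →ₗ[𝕜] X := fun m => (LinearMap.proj m ∘ₗ ι).smulRight (e m)
  have hD : ∀ m x, D m x = ι x m • e m := fun _ _ => rfl
  have hDcont : ∀ m, Continuous (D m) := fun m =>
    ((continuous_apply m).comp hι).smul continuous_const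
  have hDtendsto : ∀ x, Tendsto (fun m => D m x) atTop (𝓝 0) := fun x => by
    have := ((hpartial x).comp (tendsto_add_atTop_nat 1)).sub (hpartial x)
    simpa [hD, partialSum, Finset.sum_range_succ] using this
  refine (nhds_basis_balanced 𝕜 X).tendsto_right_iff.2 fun W ⟨hW, hWbal⟩ => ?_
  have hA := setOf_forall_mem_nhds_zero_of_isVonNBounded hbarrelled D hDcont
    (fun x => (hDtendsto x).isVonNBounded_range 𝕜) hW
  obtain ⟨N, hN⟩ := hmix (interior _) {y | 1 < ‖ι y 0‖} isOpen_interior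
    (isOpen_lt continuous_const (continuous_norm.comp ((continuous_apply 0).comp hι)))
    ⟨0, mem_interior_iff_mem_nhds.2 hA⟩ ⟨(2 : 𝕜) • e 0, by simp [he0]⟩
  refine eventually_atTop.2 ⟨N, fun n hn => ?_⟩
  obtain ⟨_, ⟨x, hxA, rfl⟩, hx⟩ := hN n hn
  rw [mem_ofPred_eq, hB.iterate, zero_add] at hx
  have hx0 : ι x n ≠ 0 := norm_pos_iff.1 (one_pos.trans hx)
  have hDx : ι x n • e n ∈ W := interior_subset hxA n
  simpa [smul_smul, inv_mul_cancel₀ hx0] using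
    hWbal.smul_mem (a := (ι x n)⁻¹) (by simpa using (inv_lt_one_of_one_lt₀ hx).le) hDx

theorem backward_shift_mixing_iff_general
    {𝕜 : Type*} [RCLike 𝕜] {X : Type*} [AddCommGroup X] [Module 𝕜 X]
    [TopologicalSpace X] [IsTopologicalAddGroup X] [ContinuousSMul 𝕜 X]
    -- X is locally convex:
    (hlc : ∀ U ∈ 𝓝 (0 : X), ∃ C ∈ 𝓝 (0 : X), C ⊆ U ∧
      ∀ a ∈ C, ∀ b ∈ C, ∀ s t : ℝ, 0 ≤ s → 0 ≤ t → s + t = 1 →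
        (s : 𝕜) • a + (t : 𝕜) • b ∈ C)
    -- X is barrelled:
    (hbarrelled : ∀ A : Set X, IsBarrelS 𝕜 A → A ∈ 𝓝 (0 : X))
    (ι : X →ₗ[𝕜] (ℕ → 𝕜)) (hinj : Function.Injective ι) (hι : Continuous ι)
    (e : ℕ → X) (he : ∀ n, ι (e n) = Pi.single n 1)
    (hbasis : ∀ x : X, ∃! α : ℕ → 𝕜,
      Tendsto (fun N => ∑ n ∈ Finset.range N, α n • e n) atTop (𝓝 x))
    (B : X →ₗ[𝕜] X) (hB : ∀ x n, ι (B x) n = ι x (n + 1))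
    :
    Mixing (⇑B) ↔ Tendsto e atTop (𝓝 (0 : X)) := by
  have hpartial := tendsto_partialSum hι he fun x => (hbasis x).exists
  refine ⟨fun hmix => ?_, IsBackwardShift.mixing_of_tendsto_basis_zero hB hinj he hpartial⟩
  let : Module ℝ X := .compHom X (algebraMap ℝ 𝕜)
  have : IsScalarTower ℝ 𝕜 X := .of_algebraMap_smul fun _ _ => rfl
  -- with `ℝ` acting through `𝕜`, `Convex ℝ C` unfolds to the convexity condition in `hlc`
  have : LocallyConvexSpace ℝ X :=
    (locallyConvexSpace_iff_exists_convex_subset_zero ℝ X).2 fun U hU =>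
      let ⟨C, hC, hCU, hCconv⟩ := hlc U hU
      ⟨C, hC, hCconv, hCU⟩
  exact IsBackwardShift.tendsto_basis_zero_of_mixing hbarrelled hB hι hpartial (he 0) hmix

/-- If `X` is a barrelled topological sequence space in which the unit vectors form a
basis and the backward shift `B` is a continuous linear operator, then `B` is mixing
iff `e n → 0`. -/
theorem backward_shift_mixing_iff
    {𝕜 : Type*} [RCLike 𝕜] {X : Type*} [AddCommGroup X] [Module 𝕜 X]
    [TopologicalSpace X] [IsTopologicalAddGroup X] [ContinuousSMul 𝕜 X]
    -- X is locally convex: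
    (hlc : ∀ U ∈ 𝓝 (0 : X), ∃ C ∈ 𝓝 (0 : X), C ⊆ U ∧
      ∀ a ∈ C, ∀ b ∈ C, ∀ s t : ℝ, 0 ≤ s → 0 ≤ t → s + t = 1 →
        (s : 𝕜) • a + (t : 𝕜) • b ∈ C)
    -- X is barrelled:
    (hbarrelled : ∀ A : Set X, IsBarrelS 𝕜 A → A ∈ 𝓝 (0 : X))
    (ι : X →ₗ[𝕜] (ℕ → 𝕜)) (hinj : Function.Injective ι) (hι : Continuous ι)
    (e : ℕ → X) (he : ∀ n, ι (e n) = Pi.single n 1)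
    (hbasis : ∀ x : X, ∃! α : ℕ → 𝕜,
      Tendsto (fun N => ∑ n ∈ Finset.range N, α n • e n) atTop (𝓝 x))
    (B : X →ₗ[𝕜] X) (hBc : Continuous B) (hB : ∀ x n, ι (B x) n = ι x (n + 1))
    :
    Mixing (⇑B) ↔ Tendsto e atTop (𝓝 (0 : X)) :=
  backward_shift_mixing_iff_general hlc hbarrelled ι hinj hι e he hbasis B hB
end
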